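/- arXiv:1611.08942 — 6 statements merged into one kernel-verified Lean document; each statement's English description precedes it below -/
import Mathlib

section
/- Let n, m be positive integers and let lb, ub : Fin m → ℤ. Let P be the set of all f : Fin n → Fin m → ℝ such that f i j ≥ 0 for all i, j; Σ_j f i j = 1 for every i; and (lb j : ℝ) ≤ Σ_i f i j ≤ (ub j : ℝ) for every j. Then every extreme point of P is a 0–1 matrix, i.e., for every extreme point f of P and all i, j, f i j = 0 or f i j = 1. -/
/-!
Let `F` be the set of fractional entries of a point `f ∈ P`. Row sums are `1`, so a row meeting `F`
meets it at least twice; the same holds for every column whose sum is an integer. Hence `F` has at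
least as many cells as there are rows and integer columns meeting it, and strictly more unless all
of `F` lies in integer columns, in which case one column constraint is implied by the others. Either
way some nonzero `G` supported on `F` has zero row sums and zero sums on the integer columns. The
entries on `F` are positive and the other columns lie strictly between their integer bounds, so
`f ± t • G ∈ P` for small `t`, and `f` is not extreme.
-/

open Set Filter Topology Finset

theorem AddSubgroup.exists_ne_notMem_of_sum_mem {α M : Type*} [AddCommGroup M] {S : AddSubgroup M}
    {s : Finset α} {x : α → M} (hsum : ∑ a ∈ s, x a ∈ S) {a : α} (ha : a ∈ s) (hx : x a ∉ S) :
    ∃ b ∈ s, b ≠ a ∧ x b ∉ S := by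
  classical
  by_contra! hrest
  rw [← add_sum_erase s x ha] at hsum
  exact hx <| (S.add_mem_cancel_right <| S.sum_mem fun b hb =>
    hrest b (mem_of_mem_erase hb) (ne_of_mem_erase hb)).mp hsum

theorem eq_zero_or_eq_one_of_mem_zmultiples_one {x : ℝ} (hx : x ∈ AddSubgroup.zmultiples 1)
    (h0 : 0 ≤ x) (h1 : x ≤ 1) : x = 0 ∨ x = 1 := by
  obtain ⟨k, rfl⟩ := AddSubgroup.mem_zmultiples_iff.mp hx
  rw [zsmul_one] at h0 h1 ⊢
  have : k = 0 ∨ k = 1 := by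
    have : (0 : ℤ) ≤ k := by exact_mod_cast h0
    have : k ≤ 1 := by exact_mod_cast h1
    omega
  rcases this with rfl | rfl <;> simp

theorem Finset.two_mul_card_image_le_card {α β : Type*} [DecidableEq β] {s : Finset α}
    {f : α → β} (h : ∀ a ∈ s, ∃ b ∈ s, f b = f a ∧ b ≠ a) : 2 * #(s.image f) ≤ #s := by
  refine mul_card_image_le_card s 2 fun b hb => ?_
  obtain ⟨a, ha, rfl⟩ := mem_image.1 hb
  obtain ⟨a', ha', hfa, hne⟩ := h a ha
  exact one_lt_card.2 ⟨a, by simp [ha], a', by simp [ha', hfa], hne.symm⟩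

theorem LinearMap.exists_ne_zero_forall_apply_eq_zero {K V ι : Type*} [Field K] [AddCommGroup V]
    [Module K V] [FiniteDimensional K V] [Fintype ι] (φ : ι → V →ₗ[K] K)
    (h : Fintype.card ι < Module.finrank K V) : ∃ v ≠ 0, ∀ i, φ i v = 0 := by
  obtain ⟨v, hv, hv0⟩ := Submodule.ne_bot_iff _ |>.mp <|
    LinearMap.ker_ne_bot_of_finrank_lt (f := LinearMap.pi φ) (by simpa using h)
  exact ⟨v, hv0, fun i => congrFun hv i⟩

theorem notMem_extremePoints_of_eventually_add_smul_mem {E : Type*} [AddCommGroup E]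
    [Module ℝ E] {S : Set E} {x v : E} (hv : v ≠ 0)
    (h : ∀ᶠ t in 𝓝 (0 : ℝ), x + t • v ∈ S) : x ∉ S.extremePoints ℝ := by
  have hneg : ∀ᶠ t in 𝓝 (0 : ℝ), x + (-t) • v ∈ S :=
    (neg_zero (G := ℝ) ▸ tendsto_neg (0 : ℝ)).eventually h
  obtain ⟨t, ⟨hplus, hminus⟩, ht⟩ := (((h.and hneg).filter_mono nhdsWithin_le_nhds).and
    (self_mem_nhdsWithin (s := Ioi (0 : ℝ)))).exists
  intro hx
  have hmid : x ∈ openSegment ℝ (x + t • v) (x + (-t) • v) :=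
    ⟨1 / 2, 1 / 2, by norm_num, by norm_num, by norm_num, by module⟩
  have := hx.2 hplus hminus hmid
  simp only [add_eq_left, smul_eq_zero] at this
  exact this.elim (ne_of_gt ht) hv

section

variable {ι κ : Type*} [Fintype ι] [Fintype κ]

theorem sum_apply_eq_zero_of_forall_ne {M : Type*} [AddCommMonoid M] {G : ι → κ → M}
    (hrow : ∀ i, ∑ j, G i j = 0) (j₀ : κ) (hcol : ∀ j ≠ j₀, ∑ i, G i j = 0) :
    ∑ i, G i j₀ = 0 :=
  calc ∑ i, G i j₀ = ∑ j, ∑ i, G i j :=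
        (sum_eq_single j₀ (fun j _ hj => hcol j hj) fun h => absurd (Finset.mem_univ j₀) h).symm
    _ = ∑ i, ∑ j, G i j := sum_comm
    _ = 0 := by simp [hrow]

theorem exists_ne_zero_rowSum_colSum_eq_zero_of_card_lt [DecidableEq ι] (F : Finset (ι × κ))
    (D : Finset κ) (h : #(F.image Prod.fst) + #D < #F) :
    ∃ G : ι → κ → ℝ, G ≠ 0 ∧ (∀ i j, G i j ≠ 0 → (i, j) ∈ F) ∧
      (∀ i, ∑ j, G i j = 0) ∧ (∀ j ∈ D, ∑ i, G i j = 0) := by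
  set R := F.image Prod.fst
  let E := Function.ExtendByZero.linearMap ℝ (Subtype.val : F → ι × κ)
  let φ : R ⊕ D → (F → ℝ) →ₗ[ℝ] ℝ := Sum.elim
    (fun i => (∑ j, LinearMap.proj (i.1, j)) ∘ₗ E) (fun j => (∑ i, LinearMap.proj (i, j.1)) ∘ₗ E)
  obtain ⟨g, hg0, hg⟩ := LinearMap.exists_ne_zero_forall_apply_eq_zero φ (by simpa using h)
  have hgF (i j) (hij : E g (i, j) ≠ 0) : (i, j) ∈ F := by
    by_contra hF
    exact hij (Function.extend_apply' _ _ _ (by simpa using hF))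
  refine ⟨fun i j => E g (i, j), fun hG => hg0 ?_, hgF, fun i => ?_,
    fun j hj => by simpa [φ] using hg (.inr ⟨j, hj⟩)⟩
  · funext p
    simpa [E, Subtype.val_injective.extend_apply] using congrFun (congrFun hG p.1.1) p.1.2
  · by_cases hi : i ∈ R
    · simpa [φ] using hg (.inl ⟨i, hi⟩)
    · exact sum_eq_zero fun j _ => by_contra fun hij => hi (mem_image_of_mem _ (hgF i j hij))

theorem exists_ne_zero_rowSum_colSum_eq_zero (F : Finset (ι × κ)) (C : Set κ) (hF : F.Nonempty)
    (hrow : ∀ p ∈ F, ∃ q ∈ F, q.1 = p.1 ∧ q ≠ p)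
    (hcol : ∀ p ∈ F, p.2 ∈ C → ∃ q ∈ F, q.2 = p.2 ∧ q ≠ p) :
    ∃ G : ι → κ → ℝ, G ≠ 0 ∧ (∀ i j, G i j ≠ 0 → (i, j) ∈ F) ∧
      (∀ i, ∑ j, G i j = 0) ∧ (∀ j ∈ C, ∑ i, G i j = 0) := by
  classical
  set FC := F.filter (·.2 ∈ C)
  set C' := FC.image Prod.snd
  have hR : 2 * #(F.image Prod.fst) ≤ #F := two_mul_card_image_le_card hrow
  have hC' : 2 * #C' ≤ #FC := two_mul_card_image_le_card fun p hp => by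
    obtain ⟨hpF, hpC⟩ := mem_filter.1 hp
    obtain ⟨q, hqF, hq, hne⟩ := hcol p hpF hpC
    exact ⟨q, mem_filter.2 ⟨hqF, hq ▸ hpC⟩, hq, hne⟩
  have hcol_zero {G : ι → κ → ℝ} (hG : ∀ i j, G i j ≠ 0 → (i, j) ∈ F) {j : κ}
      (hj : ∀ i, (i, j) ∉ F) : ∑ i, G i j = 0 :=
    sum_eq_zero fun i _ => by_contra fun h => hj i (hG i j h)
  by_cases hFC : FC = F
  -- the sum of all row constraints equals the sum of all column constraints
  · obtain ⟨p₀, hp₀⟩ := hF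
    have hj₀ : p₀.2 ∈ C' := mem_image_of_mem _ (hFC ▸ hp₀)
    have hC'F : 2 * #C' ≤ #F := hFC ▸ hC'
    obtain ⟨G, hG0, hGF, hGrow, hGcol⟩ := exists_ne_zero_rowSum_colSum_eq_zero_of_card_lt F
      (C'.erase p₀.2) (by have := card_erase_of_mem hj₀; have := card_pos.2 ⟨_, hj₀⟩; omega)
    have hne : ∀ j ≠ p₀.2, ∑ i, G i j = 0 := fun j hj => by
      by_cases hjC' : j ∈ C'
      · exact hGcol j (mem_erase.2 ⟨hj, hjC'⟩)
      · exact hcol_zero hGF fun i hi => hjC' (mem_image_of_mem Prod.snd (hFC ▸ hi : (i, j) ∈ FC))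
    refine ⟨G, hG0, hGF, hGrow, fun j _ => ?_⟩
    obtain rfl | hj := eq_or_ne j p₀.2
    · exact sum_apply_eq_zero_of_forall_ne hGrow _ hne
    · exact hne j hj
  · have hFC_lt : #FC < #F := card_lt_card ((filter_subset _ _).ssubset_of_ne hFC)
    obtain ⟨G, hG0, hGF, hGrow, hGcol⟩ :=
      exists_ne_zero_rowSum_colSum_eq_zero_of_card_lt F C' (by omega)
    refine ⟨G, hG0, hGF, hGrow, fun j hjC => ?_⟩
    by_cases hjC' : j ∈ C'
    · exact hGcol j hjC'
    · exact hcol_zero hGF fun i hi => hjC' (mem_image_of_mem Prod.snd (mem_filter.2 ⟨hi, hjC⟩))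

def binCountsPolytope (lb ub : κ → ℝ) : Set (ι → κ → ℝ) :=
  {f | (∀ i j, 0 ≤ f i j) ∧ (∀ i, ∑ j, f i j = 1) ∧
    (∀ j, lb j ≤ ∑ i, f i j ∧ ∑ i, f i j ≤ ub j)}

theorem eventually_add_smul_mem_binCountsPolytope {lb ub : κ → ℝ} {f G : ι → κ → ℝ}
    (hf : f ∈ binCountsPolytope lb ub) (hG : ∀ i j, G i j ≠ 0 → 0 < f i j)
    (hrow : ∀ i, ∑ j, G i j = 0)
    (hcol : ∀ j, ∑ i, G i j ≠ 0 → lb j < ∑ i, f i j ∧ ∑ i, f i j < ub j) :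
    ∀ᶠ t in 𝓝 (0 : ℝ), f + t • G ∈ binCountsPolytope lb ub := by
  obtain ⟨hnonneg, hsum, hbounds⟩ := hf
  have near (b c : ℝ) : Tendsto (fun t : ℝ => b + t * c) (𝓝 0) (𝓝 b) :=
    (continuous_const.add (continuous_id.mul continuous_const)).tendsto' 0 b (by simp)
  simp only [binCountsPolytope, mem_ofPred_eq, Pi.add_apply, Pi.smul_apply, smul_eq_mul,
    sum_add_distrib, ← mul_sum, hrow, hsum, mul_zero, add_zero, implies_true, true_and]
  refine (eventually_all.2 fun i => eventually_all.2 fun j => ?_).and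
    (eventually_all.2 fun j => ?_)
  · by_cases hGij : G i j = 0
    · simp [hGij, hnonneg i j]
    · exact ((near _ _).eventually_const_lt (hG i j hGij)).mono fun _ => le_of_lt
  · by_cases hGj : ∑ i, G i j = 0
    · simp [hGj, hbounds j]
    · obtain ⟨hlb, hub⟩ := hcol j hGj
      exact ((near _ _).eventually_const_lt hlb).and ((near _ _).eventually_lt_const hub)
        |>.mono fun _ h => ⟨h.1.le, h.2.le⟩

end

theorem bin_counts_polyhedron_extremePoints_zero_one_general
    (n m : ℕ) (lb ub : Fin m → ℤ)
    (P : Set (Fin n → Fin m → ℝ))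
    (hP : P = {f | (∀ i j, 0 ≤ f i j) ∧ (∀ i, ∑ j, f i j = 1) ∧
      (∀ j, (lb j : ℝ) ≤ ∑ i, f i j ∧ ∑ i, f i j ≤ (ub j : ℝ))}) :
    ∀ f ∈ Set.extremePoints ℝ P, ∀ i j, f i j = 0 ∨ f i j = 1 := by
  classical
  change P = binCountsPolytope (fun j => (lb j : ℝ)) (fun j => (ub j : ℝ)) at hP
  subst hP
  intro f hf i₀ j₀
  by_contra h₀₁
  obtain ⟨hnonneg, hrow, hcol⟩ := hf.1
  set Z := AddSubgroup.zmultiples (1 : ℝ)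
  have hint (k : ℤ) : (k : ℝ) ∈ Z := AddSubgroup.intCast_mem_zmultiples_one k
  let F := univ.filter fun p : Fin n × Fin m => f p.1 p.2 ∉ Z
  have hF₀ : (i₀, j₀) ∈ F := by
    have hle : f i₀ j₀ ≤ 1 := hrow i₀ ▸ single_le_sum (fun j _ => hnonneg i₀ j) (mem_univ j₀)
    simpa [F] using mt (eq_zero_or_eq_one_of_mem_zmultiples_one · (hnonneg i₀ j₀) hle) h₀₁
  have hrow₂ (p) (hp : p ∈ F) : ∃ q ∈ F, q.1 = p.1 ∧ q ≠ p := by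
    obtain ⟨j, -, hj, hjZ⟩ := AddSubgroup.exists_ne_notMem_of_sum_mem (x := f p.1)
      (by rw [hrow]; exact AddSubgroup.mem_zmultiples 1) (mem_univ p.2) (by simpa [F] using hp)
    exact ⟨(p.1, j), by simpa [F] using hjZ, rfl, fun h => hj (congrArg Prod.snd h)⟩
  have hcol₂ (p) (hp : p ∈ F) (hpZ : ∑ i, f i p.2 ∈ Z) : ∃ q ∈ F, q.2 = p.2 ∧ q ≠ p := by
    obtain ⟨i, -, hi, hiZ⟩ := AddSubgroup.exists_ne_notMem_of_sum_mem (x := (f · p.2))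
      hpZ (mem_univ p.1) (by simpa [F] using hp)
    exact ⟨(i, p.2), by simpa [F] using hiZ, rfl, fun h => hi (congrArg Prod.fst h)⟩
  obtain ⟨G, hG0, hGF, hGrow, hGcol⟩ :=
    exists_ne_zero_rowSum_colSum_eq_zero F {j | ∑ i, f i j ∈ Z} ⟨_, hF₀⟩ hrow₂ hcol₂
  refine notMem_extremePoints_of_eventually_add_smul_mem hG0
    (eventually_add_smul_mem_binCountsPolytope hf.1 (fun i j hGij => ?_) hGrow fun j hj => ?_) hf
  · have : f i j ∉ Z := by simpa [F] using hGF i j hGij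
    exact (hnonneg i j).lt_of_ne' fun h => this (h ▸ Z.zero_mem)
  · have : ∑ i, f i j ∉ Z := mt (hGcol j) hj
    exact ⟨(hcol j).1.lt_of_ne fun h => this (h ▸ hint _),
      (hcol j).2.lt_of_ne fun h => this (h ▸ hint _)⟩

/-- Every extreme point of the feasible region of the flow reformulation of the
`bin_counts` constraint is a 0–1 matrix. -/
theorem bin_counts_polyhedron_extremePoints_zero_one
    (n m : ℕ) (hn : 0 < n) (hm : 0 < m) (lb ub : Fin m → ℤ)
    (P : Set (Fin n → Fin m → ℝ))
    (hP : P = {f | (∀ i j, 0 ≤ f i j) ∧ (∀ i, ∑ j, f i j = 1) ∧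
      (∀ j, (lb j : ℝ) ≤ ∑ i, f i j ∧ ∑ i, f i j ≤ (ub j : ℝ))}) :
    ∀ f ∈ Set.extremePoints ℝ P, ∀ i j, f i j = 0 ∨ f i j = 1 :=
  bin_counts_polyhedron_extremePoints_zero_one_general n m lb ub P hP
end

section
/- Let n, m be positive integers and let lb, ub : Fin m → ℤ. Let P be the set of all f : Fin n → Fin m → ℝ such that f i j ≥ 0 for all i, j; Σ_j f i j = 1 for every i; and (lb j : ℝ) ≤ Σ_i f i j ≤ (ub j : ℝ) for every j. Then P is nonempty if and only if there exists f ∈ P such that f i j ∈ {0,1} for all i, j. -/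
open Finset

private lemma exists_int_sum (m : ℕ) : ∀ (L U : Fin m → ℤ), (∀ j, L j ≤ U j) →
    ∀ N : ℤ, (∑ j, L j) ≤ N → N ≤ ∑ j, U j →
    ∃ c : Fin m → ℤ, (∀ j, L j ≤ c j ∧ c j ≤ U j) ∧ ∑ j, c j = N := by
  induction m with
  | zero =>
    intro L U _ N h1 h2
    refine ⟨fun _ => 0, fun j => j.elim0, ?_⟩
    simp at h1 h2 ⊢
    omega
  | succ m ih =>
    intro L U h N h1 h2
    rw [Fin.sum_univ_succ] at h1 h2
    set c0 : ℤ := max (L 0) (N - ∑ j : Fin m, U j.succ) with hc0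
    have hge : N - ∑ j : Fin m, U j.succ ≤ c0 := le_max_right _ _
    have hgeL : L 0 ≤ c0 := le_max_left _ _
    have hc0U : c0 ≤ U 0 := max_le (h 0) (by omega)
    have hLsum : ∑ j : Fin m, L j.succ ≤ N - c0 := by
      rcases max_cases (L 0) (N - ∑ j : Fin m, U j.succ) with ⟨he, _⟩ | ⟨he, _⟩
      · omega
      · have : ∑ j : Fin m, L j.succ ≤ ∑ j : Fin m, U j.succ :=
          Finset.sum_le_sum fun j _ => h j.succ
        omega
    obtain ⟨c, hc, hsum⟩ := ih (fun j => L j.succ) (fun j => U j.succ)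
      (fun j => h j.succ) (N - c0) hLsum (show N - c0 ≤ ∑ j : Fin m, U j.succ by omega)
    refine ⟨Fin.cons c0 c, ?_, ?_⟩
    · intro j
      refine Fin.cases ?_ ?_ j
      · exact ⟨hgeL, hc0U⟩
      · intro j; simpa using hc j
    · rw [Fin.sum_univ_succ]
      simp only [Fin.cons_zero, Fin.cons_succ]
      omega

private def sigmaFiber {m : ℕ} (c : Fin m → ℕ) (j : Fin m) :
    {p : (j' : Fin m) × Fin (c j') // p.1 = j} ≃ Fin (c j) where
  toFun p := p.2 ▸ p.1.2
  invFun x := ⟨⟨j, x⟩, rfl⟩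
  left_inv := by rintro ⟨⟨j', x⟩, rfl⟩; rfl
  right_inv := by intro x; rfl

private lemma exists_fiber_card (n m : ℕ) (c : Fin m → ℕ) (hc : ∑ j, c j = n) :
    ∃ g : Fin n → Fin m, ∀ j, (univ.filter (fun i => g i = j)).card = c j := by
  have e : Fin n ≃ (j : Fin m) × Fin (c j) :=
    Fintype.equivOfCardEq (by simp [hc])
  refine ⟨fun i => (e i).1, fun j => ?_⟩
  rw [← Fintype.card_subtype]
  rw [Fintype.card_congr ((e.subtypeEquiv fun i => Iff.rfl).trans (sigmaFiber c j))]
  simp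

/-- The feasible region of the flow reformulation of the `bin_counts` constraint
is nonempty iff it contains a 0–1 point. -/
theorem bin_counts_polyhedron_nonempty_iff_integral_point
    (n m : ℕ) (hn : 0 < n) (hm : 0 < m) (lb ub : Fin m → ℤ)
    (P : Set (Fin n → Fin m → ℝ))
    (hP : P = {f | (∀ i j, 0 ≤ f i j) ∧ (∀ i, ∑ j, f i j = 1) ∧
      (∀ j, (lb j : ℝ) ≤ ∑ i, f i j ∧ ∑ i, f i j ≤ (ub j : ℝ))}) :
    P.Nonempty ↔ ∃ f ∈ P, ∀ i j, f i j = 0 ∨ f i j = 1 := by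
  constructor
  · rintro ⟨f, hf⟩
    rw [hP] at hf
    obtain ⟨hpos, hrow, hcol⟩ := hf
    have hsnn : ∀ j, (0:ℝ) ≤ ∑ i, f i j := fun j => Finset.sum_nonneg fun i _ => hpos i j
    have htot : ∑ j, ∑ i, f i j = (n : ℝ) := by
      rw [Finset.sum_comm]; simp [hrow]
    set L : Fin m → ℤ := fun j => max (lb j) 0 with hLdef
    have hLcast : ∀ j, (L j : ℝ) ≤ ∑ i, f i j := by
      intro j
      have : (L j : ℝ) = max ((lb j : ℝ)) 0 := by push_cast [hLdef]; rfl
      rw [this]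
      exact max_le (hcol j).1 (hsnn j)
    have hLU : ∀ j, L j ≤ ub j := by
      intro j
      have : (L j : ℝ) ≤ (ub j : ℝ) := le_trans (hLcast j) (hcol j).2
      exact_mod_cast this
    have hLn : ∑ j, L j ≤ (n : ℤ) := by
      have : (↑(∑ j, L j) : ℝ) ≤ (n : ℝ) := by
        push_cast
        rw [← htot]
        exact Finset.sum_le_sum fun j _ => hLcast j
      exact_mod_cast this
    have hUn : (n : ℤ) ≤ ∑ j, ub j := by
      have : (n : ℝ) ≤ (↑(∑ j, ub j) : ℝ) := by
        push_cast
        rw [← htot]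
        exact Finset.sum_le_sum fun j _ => (hcol j).2
      exact_mod_cast this
    obtain ⟨c, hc, hcsum⟩ := exists_int_sum m L ub hLU n hLn hUn
    have hcnn : ∀ j, 0 ≤ c j := fun j => le_trans (le_max_right _ _) (hc j).1
    set cn : Fin m → ℕ := fun j => (c j).toNat with hcn
    have hcnc : ∀ j, (cn j : ℤ) = c j := fun j => Int.toNat_of_nonneg (hcnn j)
    have hcnsum : ∑ j, cn j = n := by
      have : (↑(∑ j, cn j) : ℤ) = (n : ℤ) := by
        push_cast [hcnc]
        rw [← hcsum]
      exact_mod_cast this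
    obtain ⟨g, hg⟩ := exists_fiber_card n m cn hcnsum
    refine ⟨fun i j => if g i = j then 1 else 0, ?_, ?_⟩
    · rw [hP]
      refine ⟨fun i j => by positivity, fun i => by simp, fun j => ?_⟩
      have hcolsum : ∑ i, (if g i = j then (1:ℝ) else 0) = (cn j : ℝ) := by
        rw [Finset.sum_ite, Finset.sum_const, Finset.sum_const]
        simp [hg j]
      rw [hcolsum]
      constructor
      · have : lb j ≤ c j := le_trans (le_max_left _ _) (hc j).1
        have : (lb j : ℤ) ≤ (cn j : ℤ) := by rw [hcnc]; exact this
        exact_mod_cast this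
      · have : (cn j : ℤ) ≤ ub j := by rw [hcnc]; exact (hc j).2
        exact_mod_cast this
    · intro i j
      by_cases h : g i = j <;> simp [h]
  · rintro ⟨f, hf, _⟩
    exact ⟨f, hf⟩
end

section
/- Let n, m be positive integers and let lb, ub : Fin m → ℤ. Let P be the set of all f : Fin n → Fin m → ℝ such that f i j ≥ 0 for all i, j; Σ_j f i j = 1 for every i; and (lb j : ℝ) ≤ Σ_i f i j ≤ (ub j : ℝ) for every j. Then P equals the convex hull of the set of its 0–1 points, i.e., P = convexHull ℝ {f ∈ P | ∀ i j, f i j = 0 ∨ f i j = 1}. -/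
open Finset

def IsIntR (x : ℝ) : Prop := ∃ z : ℤ, x = (z : ℝ)

lemma IsIntR.sub {x y : ℝ} (hx : IsIntR x) (hy : IsIntR y) : IsIntR (x - y) := by
  obtain ⟨a, ha⟩ := hx; obtain ⟨b, hb⟩ := hy
  exact ⟨a - b, by push_cast [ha, hb]; ring⟩

lemma IsIntR.finsetSum {α : Type*} (s : Finset α) (g : α → ℝ)
    (h : ∀ a ∈ s, IsIntR (g a)) : IsIntR (∑ a ∈ s, g a) := by
  classical
  induction s using Finset.induction_on with
  | empty => exact ⟨0, by simp⟩
  | @insert a s ha ih =>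
    rw [Finset.sum_insert ha]
    obtain ⟨za, hza⟩ := h a (Finset.mem_insert_self a s)
    obtain ⟨zs, hzs⟩ := ih (fun b hb => h b (Finset.mem_insert_of_mem hb))
    exact ⟨za + zs, by push_cast [hza, hzs]; ring⟩

open Classical in
/-- The row/column-sum linear map used in the rank argument. -/
noncomputable def PhiMap (n m : ℕ) (F : Finset (Fin n × Fin m)) (R : Finset (Fin n))
    (C' : Finset (Fin m)) : (↥F → ℝ) →ₗ[ℝ] ((↥R → ℝ) × (↥C' → ℝ)) where
  toFun x := (fun i => ∑ e : ↥F, if (e : Fin n × Fin m).1 = (i : Fin n) then x e else 0,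
              fun j => ∑ e : ↥F, if (e : Fin n × Fin m).2 = (j : Fin m) then x e else 0)
  map_add' x y := by
    refine Prod.ext ?_ ?_
    · funext i
      simp only [Prod.fst_add, Pi.add_apply]
      rw [← Finset.sum_add_distrib]
      refine Finset.sum_congr rfl fun e _ => ?_
      by_cases h : (e : Fin n × Fin m).1 = (i : Fin n) <;> simp [h]
    · funext j
      simp only [Prod.snd_add, Pi.add_apply]
      rw [← Finset.sum_add_distrib]
      refine Finset.sum_congr rfl fun e _ => ?_
      by_cases h : (e : Fin n × Fin m).2 = (j : Fin m) <;> simp [h]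
  map_smul' c x := by
    refine Prod.ext ?_ ?_
    · funext i
      simp only [Prod.smul_fst, Pi.smul_apply, smul_eq_mul, RingHom.id_apply]
      rw [Finset.mul_sum]
      refine Finset.sum_congr rfl fun e _ => ?_
      by_cases h : (e : Fin n × Fin m).1 = (i : Fin n) <;> simp [h]
    · funext j
      simp only [Prod.smul_snd, Pi.smul_apply, smul_eq_mul, RingHom.id_apply]
      rw [Finset.mul_sum]
      refine Finset.sum_congr rfl fun e _ => ?_
      by_cases h : (e : Fin n × Fin m).2 = (j : Fin m) <;> simp [h]

lemma exists_direction {n m : ℕ} (F : Finset (Fin n × Fin m)) (hF : F.Nonempty)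
    (C : Finset (Fin m))
    (hrow : ∀ e ∈ F, 2 ≤ (F.filter (fun e' => e'.1 = e.1)).card)
    (hcol : ∀ e ∈ F, e.2 ∈ C → 2 ≤ (F.filter (fun e' => e'.2 = e.2)).card) :
    ∃ d : Fin n → Fin m → ℝ, d ≠ 0 ∧ (∀ i j, (i, j) ∉ F → d i j = 0) ∧
      (∀ i, ∑ j, d i j = 0) ∧ (∀ j ∈ C, ∑ i, d i j = 0) := by
  classical
  set R : Finset (Fin n) := F.image Prod.fst with hR
  set C' : Finset (Fin m) := (F.filter (fun e => e.2 ∈ C)).image Prod.snd with hC'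
  set Φ := PhiMap n m F R C' with hΦ
  -- first: a nonzero kernel element
  obtain ⟨x, hx0, hxker⟩ : ∃ x : ↥F → ℝ, x ≠ 0 ∧ Φ x = 0 := by
    by_contra hcon
    push_neg at hcon
    have hinj : Function.Injective Φ := by
      rw [← LinearMap.ker_eq_bot, Submodule.eq_bot_iff]
      intro x hx
      by_contra hxne
      exact hcon x hxne (by simpa using hx)
    -- cardinality facts
    have hFR : 2 * R.card ≤ F.card := by
      have h1 : F.card = ∑ i ∈ R, (F.filter (fun e => e.1 = i)).card :=
        Finset.card_eq_sum_card_fiberwise (fun e he => Finset.mem_image_of_mem _ he)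
      have h2 : ∀ i ∈ R, 2 ≤ (F.filter (fun e => e.1 = i)).card := by
        intro i hi
        obtain ⟨e, he, hei⟩ := Finset.mem_image.mp hi
        have := hrow e he
        simpa [hei] using this
      calc 2 * R.card = ∑ _i ∈ R, 2 := by simp [mul_comm]
        _ ≤ _ := Finset.sum_le_sum h2
        _ = F.card := h1.symm
    set F2 : Finset (Fin n × Fin m) := F.filter (fun e => e.2 ∈ C) with hF2
    have hfib : ∀ j ∈ C', F2.filter (fun e => e.2 = j) = F.filter (fun e => e.2 = j) := by
      intro j hj
      obtain ⟨e, he, hej⟩ := Finset.mem_image.mp hj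
      rw [Finset.mem_filter] at he
      ext e'
      simp only [hF2, Finset.mem_filter, and_assoc]
      constructor
      · rintro ⟨h1, _, h3⟩; exact ⟨h1, h3⟩
      · rintro ⟨h1, h3⟩; exact ⟨h1, by rw [h3]; exact hej ▸ he.2, h3⟩
    have hF2card : F2.card = ∑ j ∈ C', (F2.filter (fun e => e.2 = j)).card :=
      Finset.card_eq_sum_card_fiberwise (fun e he => Finset.mem_image_of_mem _ he)
    have hFC : 2 * C'.card ≤ F2.card := by
      have h2 : ∀ j ∈ C', 2 ≤ (F2.filter (fun e => e.2 = j)).card := by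
        intro j hj
        rw [hfib j hj]
        obtain ⟨e, he, hej⟩ := Finset.mem_image.mp hj
        rw [Finset.mem_filter] at he
        have := hcol e he.1 he.2
        simpa [hej] using this
      calc 2 * C'.card = ∑ _j ∈ C', 2 := by simp [mul_comm]
        _ ≤ _ := Finset.sum_le_sum h2
        _ = F2.card := hF2card.symm
    have hF2sub : F2.card ≤ F.card := Finset.card_le_card (Finset.filter_subset _ _)
    have hle : F.card ≤ R.card + C'.card := by
      have := LinearMap.finrank_le_finrank_of_injective hinj
      simpa [Module.finrank_prod, Module.finrank_pi, Fintype.card_coe] using this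
    -- so everything is tight
    have h1 : F.card = R.card + C'.card := by omega
    have hF2eq : F2 = F := Finset.eq_of_subset_of_card_le (Finset.filter_subset _ _) (by omega)
    have hall : ∀ e ∈ F, e.2 ∈ C' := by
      intro e he
      have : e ∈ F2 := hF2eq.symm ▸ he
      exact Finset.mem_image_of_mem _ (by rwa [← hF2])
    -- surjectivity
    have hsurj : LinearMap.range Φ = ⊤ := by
      rw [← LinearMap.ker_eq_bot_iff_range_eq_top_of_finrank_eq_finrank
        (by simp [Module.finrank_prod, Module.finrank_pi, Fintype.card_coe, h1]),
        LinearMap.ker_eq_bot]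
      exact hinj
    -- the dependency functional
    have hdep : ∀ x : ↥F → ℝ, (∑ i : ↥R, (Φ x).1 i) - (∑ j : ↥C', (Φ x).2 j) = 0 := by
      intro x
      have hrowsum : ∑ i : ↥R, (Φ x).1 i = ∑ e : ↥F, x e := by
        show ∑ i : ↥R, ∑ e : ↥F, (if (e : Fin n × Fin m).1 = (i : Fin n) then x e else 0) = _
        rw [Finset.sum_comm]
        refine Finset.sum_congr rfl fun e _ => ?_
        have hmem : (e : Fin n × Fin m).1 ∈ R := Finset.mem_image_of_mem _ e.2
        rw [Finset.sum_eq_single_of_mem (⟨(e : Fin n × Fin m).1, hmem⟩ : ↥R) (Finset.mem_univ _)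
          (fun b _ hb => if_neg (fun hc => hb (Subtype.ext hc.symm)))]
        exact if_pos rfl
      have hcolsum : ∑ j : ↥C', (Φ x).2 j = ∑ e : ↥F, x e := by
        show ∑ j : ↥C', ∑ e : ↥F, (if (e : Fin n × Fin m).2 = (j : Fin m) then x e else 0) = _
        rw [Finset.sum_comm]
        refine Finset.sum_congr rfl fun e _ => ?_
        have hmem : (e : Fin n × Fin m).2 ∈ C' := hall _ e.2
        rw [Finset.sum_eq_single_of_mem (⟨(e : Fin n × Fin m).2, hmem⟩ : ↥C') (Finset.mem_univ _)
          (fun b _ hb => if_neg (fun hc => hb (Subtype.ext hc.symm)))]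
        exact if_pos rfl
      rw [hrowsum, hcolsum, sub_self]
    -- contradiction: hit the vector (1, 0)
    have hy : ((fun _ => 1, fun _ => 0) : (↥R → ℝ) × (↥C' → ℝ)) ∈ LinearMap.range Φ := by
      rw [hsurj]; trivial
    obtain ⟨x, hx⟩ := hy
    have := hdep x
    rw [hx] at this
    have hRne : R.Nonempty := hF.image _
    have : (R.card : ℝ) = 0 := by simpa using this
    have : R.card = 0 := by exact_mod_cast this
    simp only [Finset.card_eq_zero] at this
    exact hRne.ne_empty this
  -- now build d
  refine ⟨fun i j => ∑ e : ↥F, if (e : Fin n × Fin m) = (i, j) then x e else 0, ?_, ?_, ?_, ?_⟩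
  · -- d ≠ 0
    intro hd0
    apply hx0
    funext e
    have hthis := congrFun (congrFun hd0 (e : Fin n × Fin m).1) (e : Fin n × Fin m).2
    simp only [Pi.zero_apply] at hthis
    rw [Finset.sum_eq_single_of_mem e (Finset.mem_univ _)
      (fun b _ hb => if_neg (fun hc => hb (Subtype.ext (by simpa using hc))))] at hthis
    simpa using hthis
  · -- support
    intro i j hij
    refine Finset.sum_eq_zero fun e _ => ?_
    rw [if_neg]
    intro hc
    exact hij (hc ▸ e.2)
  · -- row sums
    intro i
    have key : ∑ j, (∑ e : ↥F, if (e : Fin n × Fin m) = (i, j) then x e else 0)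
        = ∑ e : ↥F, if (e : Fin n × Fin m).1 = i then x e else 0 := by
      rw [Finset.sum_comm]
      refine Finset.sum_congr rfl fun e _ => ?_
      by_cases h : (e : Fin n × Fin m).1 = i
      · rw [Finset.sum_eq_single_of_mem ((e : Fin n × Fin m).2) (Finset.mem_univ _)
          (fun b _ hb => if_neg (fun hc => hb (congrArg Prod.snd hc).symm))]
        rw [if_pos h]
        refine if_pos ?_
        rw [← h]
      · rw [if_neg h]
        refine Finset.sum_eq_zero fun b _ => ?_
        refine if_neg fun hc => h (congrArg Prod.fst hc)
    rw [key]
    by_cases hiR : i ∈ R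
    · have := congrFun (congrArg Prod.fst hxker) ⟨i, hiR⟩
      simpa [hΦ, PhiMap] using this
    · refine Finset.sum_eq_zero fun e _ => ?_
      refine if_neg fun (hc : (e : Fin n × Fin m).1 = i) => hiR (hc ▸ Finset.mem_image_of_mem _ e.2)
  · -- column sums for C
    intro j hjC
    have key : ∑ i, (∑ e : ↥F, if (e : Fin n × Fin m) = (i, j) then x e else 0)
        = ∑ e : ↥F, if (e : Fin n × Fin m).2 = j then x e else 0 := by
      rw [Finset.sum_comm]
      refine Finset.sum_congr rfl fun e _ => ?_
      by_cases h : (e : Fin n × Fin m).2 = j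
      · rw [Finset.sum_eq_single_of_mem ((e : Fin n × Fin m).1) (Finset.mem_univ _)
          (fun b _ hb => if_neg (fun hc => hb (congrArg Prod.fst hc).symm))]
        rw [if_pos h]
        refine if_pos ?_
        rw [← h]
      · rw [if_neg h]
        refine Finset.sum_eq_zero fun b _ => ?_
        refine if_neg fun hc => h (congrArg Prod.snd hc)
    rw [key]
    by_cases hjC' : j ∈ C'
    · have := congrFun (congrArg Prod.snd hxker) ⟨j, hjC'⟩
      simpa [hΦ, PhiMap] using this
    · refine Finset.sum_eq_zero fun e _ => ?_
      refine if_neg fun hc => ?_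
      refine hjC' (Finset.mem_image.mpr ⟨e, ?_, hc⟩)
      exact Finset.mem_filter.mpr ⟨e.2, hc ▸ hjC⟩

/-- The feasible region of the flow reformulation of the `bin_counts` constraint
is an integral polytope: it equals the convex hull of its 0–1 points. -/
theorem bin_counts_polyhedron_eq_convexHull_integral_points
    (n m : ℕ) (hn : 0 < n) (hm : 0 < m) (lb ub : Fin m → ℤ)
    (P : Set (Fin n → Fin m → ℝ))
    (hP : P = {f | (∀ i j, 0 ≤ f i j) ∧ (∀ i, ∑ j, f i j = 1) ∧
      (∀ j, (lb j : ℝ) ≤ ∑ i, f i j ∧ ∑ i, f i j ≤ (ub j : ℝ))}) :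
    P = convexHull ℝ {f ∈ P | ∀ i j, f i j = 0 ∨ f i j = 1} := by
  classical
  set Z : Set (Fin n → Fin m → ℝ) := {f ∈ P | ∀ i j, f i j = 0 ∨ f i j = 1} with hZ
  -- P is convex
  have hPconvex : Convex ℝ P := by
    rw [hP]
    rintro g hg h hh α β hα hβ hαβ
    simp only [Set.mem_setOf_eq] at hg hh ⊢
    obtain ⟨hg0, hg1, hg2⟩ := hg
    obtain ⟨hh0, hh1, hh2⟩ := hh
    have happ : ∀ i j, (α • g + β • h) i j = α * g i j + β * h i j := fun i j => rfl
    refine ⟨fun i j => ?_, fun i => ?_, fun j => ?_⟩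
    · rw [happ i j]
      exact add_nonneg (mul_nonneg hα (hg0 i j)) (mul_nonneg hβ (hh0 i j))
    · simp_rw [happ i]
      rw [Finset.sum_add_distrib, ← Finset.mul_sum, ← Finset.mul_sum, hg1 i, hh1 i]
      simpa using hαβ
    · simp_rw [happ]
      rw [Finset.sum_add_distrib, ← Finset.mul_sum, ← Finset.mul_sum]
      obtain ⟨hgl, hgu⟩ := hg2 j
      obtain ⟨hhl, hhu⟩ := hh2 j
      have hlb : α * (lb j : ℝ) + β * (lb j : ℝ) = (lb j : ℝ) := by
        rw [← add_mul, hαβ, one_mul]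
      have hub' : α * (ub j : ℝ) + β * (ub j : ℝ) = (ub j : ℝ) := by
        rw [← add_mul, hαβ, one_mul]
      constructor
      · have e1 := mul_le_mul_of_nonneg_left hgl hα
        have e2 := mul_le_mul_of_nonneg_left hhl hβ
        linarith
      · have e1 := mul_le_mul_of_nonneg_left hgu hα
        have e2 := mul_le_mul_of_nonneg_left hhu hβ
        linarith
  -- P is closed
  have hcont : ∀ i j, Continuous fun f : Fin n → Fin m → ℝ => f i j :=
    fun i j => (continuous_apply j).comp (continuous_apply i)
  have hPclosed : IsClosed P := by
    rw [hP]
    have heq : {f : Fin n → Fin m → ℝ | (∀ i j, 0 ≤ f i j) ∧ (∀ i, ∑ j, f i j = 1) ∧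
        (∀ j, (lb j : ℝ) ≤ ∑ i, f i j ∧ ∑ i, f i j ≤ (ub j : ℝ))} =
        (⋂ i, ⋂ j, {f : Fin n → Fin m → ℝ | 0 ≤ f i j}) ∩
        ((⋂ i, {f : Fin n → Fin m → ℝ | ∑ j, f i j = 1}) ∩
         (⋂ j, ({f : Fin n → Fin m → ℝ | (lb j : ℝ) ≤ ∑ i, f i j} ∩
                {f : Fin n → Fin m → ℝ | ∑ i, f i j ≤ (ub j : ℝ)}))) := by
      ext f
      simp only [Set.mem_setOf_eq, Set.mem_inter_iff, Set.mem_iInter]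
    rw [heq]
    refine IsClosed.inter (isClosed_iInter fun i => isClosed_iInter fun j =>
        isClosed_le continuous_const (hcont i j)) (IsClosed.inter
      (isClosed_iInter fun i => isClosed_eq (continuous_finset_sum _ fun j _ => hcont i j)
        continuous_const)
      (isClosed_iInter fun j => IsClosed.inter
        (isClosed_le continuous_const (continuous_finset_sum _ fun i _ => hcont i j))
        (isClosed_le (continuous_finset_sum _ fun i _ => hcont i j) continuous_const)))
  -- entries of members of P are in [0,1]
  have hub1 : ∀ f ∈ P, ∀ i j, f i j ≤ 1 := by
    intro f hf i j
    rw [hP] at hf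
    obtain ⟨h0, h1, _⟩ := hf
    calc f i j ≤ ∑ j', f i j' := Finset.single_le_sum (fun j' _ => h0 i j') (Finset.mem_univ j)
      _ = 1 := h1 i
  -- integral members of P are in Z
  have hZmem : ∀ f ∈ P, (∀ i j, IsIntR (f i j)) → f ∈ Z := by
    intro f hf hint
    refine ⟨hf, fun i j => ?_⟩
    obtain ⟨z, hz⟩ := hint i j
    have h0 : 0 ≤ f i j := by rw [hP] at hf; exact hf.1 i j
    have h1 : f i j ≤ 1 := hub1 f hf i j
    rw [hz] at h0 h1 ⊢
    have hz0 : (0 : ℤ) ≤ z := by exact_mod_cast h0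
    have hz1 : z ≤ 1 := by exact_mod_cast h1
    have : z = 0 ∨ z = 1 := by omega
    rcases this with h | h <;> simp [h]
  -- the main induction
  have main : ∀ N : ℕ, ∀ f, f ∈ P →
      (Finset.univ.filter fun e : Fin n × Fin m => ¬ IsIntR (f e.1 e.2)).card +
      (Finset.univ.filter fun j : Fin m => ¬ IsIntR (∑ i, f i j)).card ≤ N →
      f ∈ convexHull ℝ Z := by
    intro N
    induction N with
    | zero =>
      intro f hf hN
      refine subset_convexHull ℝ Z (hZmem f hf fun i j => ?_)
      by_contra hni
      have hmem : (i, j) ∈ Finset.univ.filter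
          (fun e : Fin n × Fin m => ¬ IsIntR (f e.1 e.2)) := by simp [hni]
      have := Finset.card_pos.mpr ⟨_, hmem⟩
      omega
    | succ N ih =>
      intro f hf hN
      by_cases hFne : (Finset.univ.filter fun e : Fin n × Fin m =>
          ¬ IsIntR (f e.1 e.2)).Nonempty
      case neg =>
        refine subset_convexHull ℝ Z (hZmem f hf fun i j => ?_)
        by_contra hni
        exact hFne ⟨(i, j), by simp [hni]⟩
      case pos =>
      set Ffr : Finset (Fin n × Fin m) :=
        Finset.univ.filter (fun e : Fin n × Fin m => ¬ IsIntR (f e.1 e.2)) with hFfr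
      set Cint : Finset (Fin m) :=
        Finset.univ.filter (fun j : Fin m => IsIntR (∑ i, f i j)) with hCint
      have hfP := hf
      rw [hP] at hfP
      obtain ⟨h0, h1, h2⟩ := hfP
      -- row multiplicity
      have hrow : ∀ e ∈ Ffr, 2 ≤ (Ffr.filter (fun e' => e'.1 = e.1)).card := by
        intro e he
        by_contra hlt
        push_neg at hlt
        have hes : e ∈ Ffr.filter (fun e' => e'.1 = e.1) :=
          Finset.mem_filter.mpr ⟨he, rfl⟩
        have hcard1 : (Ffr.filter (fun e' => e'.1 = e.1)).card = 1 := by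
          have := Finset.card_pos.mpr ⟨e, hes⟩
          omega
        obtain ⟨a, ha⟩ := Finset.card_eq_one.mp hcard1
        have hea : e = a := by
          have := ha ▸ hes
          simpa using this
        have hint : ∀ j ∈ Finset.univ.erase e.2, IsIntR (f e.1 j) := by
          intro j hj
          by_contra hni
          have hmem : (e.1, j) ∈ Ffr.filter (fun e' => e'.1 = e.1) := by
            refine Finset.mem_filter.mpr ⟨?_, rfl⟩
            simp [hFfr, hni]
          rw [ha, Finset.mem_singleton, ← hea] at hmem
          have : j = e.2 := (congrArg Prod.snd hmem).symm ▸ rfl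
          exact (Finset.mem_erase.mp hj).1 this
        have hisint : IsIntR (f e.1 e.2) := by
          have hsum := Finset.add_sum_erase Finset.univ (fun j => f e.1 j)
            (Finset.mem_univ e.2)
          have hfe : f e.1 e.2 = 1 - ∑ j ∈ Finset.univ.erase e.2, f e.1 j := by
            rw [← h1 e.1, ← hsum]; ring
          rw [hfe]
          exact IsIntR.sub ⟨1, by norm_num⟩ (IsIntR.finsetSum _ _ hint)
        have := Finset.mem_filter.mp he
        exact this.2 hisint
      -- column multiplicity
      have hcol : ∀ e ∈ Ffr, e.2 ∈ Cint →
          2 ≤ (Ffr.filter (fun e' => e'.2 = e.2)).card := by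
        intro e he heC
        by_contra hlt
        push_neg at hlt
        have hes : e ∈ Ffr.filter (fun e' => e'.2 = e.2) :=
          Finset.mem_filter.mpr ⟨he, rfl⟩
        have hcard1 : (Ffr.filter (fun e' => e'.2 = e.2)).card = 1 := by
          have := Finset.card_pos.mpr ⟨e, hes⟩
          omega
        obtain ⟨a, ha⟩ := Finset.card_eq_one.mp hcard1
        have hea : e = a := by
          have := ha ▸ hes
          simpa using this
        have hint : ∀ i ∈ Finset.univ.erase e.1, IsIntR (f i e.2) := by
          intro i hi
          by_contra hni
          have hmem : (i, e.2) ∈ Ffr.filter (fun e' => e'.2 = e.2) := by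
            refine Finset.mem_filter.mpr ⟨?_, rfl⟩
            simp [hFfr, hni]
          rw [ha, Finset.mem_singleton, ← hea] at hmem
          have : i = e.1 := (congrArg Prod.fst hmem).symm ▸ rfl
          exact (Finset.mem_erase.mp hi).1 this
        have hCisint : IsIntR (∑ i, f i e.2) := by
          have := Finset.mem_filter.mp heC
          exact this.2
        have hisint : IsIntR (f e.1 e.2) := by
          have hsum := Finset.add_sum_erase Finset.univ (fun i => f i e.2)
            (Finset.mem_univ e.1)
          have hfe : f e.1 e.2 = (∑ i, f i e.2) - ∑ i ∈ Finset.univ.erase e.1, f i e.2 := by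
            rw [← hsum]; ring
          rw [hfe]
          exact IsIntR.sub hCisint (IsIntR.finsetSum _ _ hint)
        have := Finset.mem_filter.mp he
        exact this.2 hisint
      -- get the direction
      obtain ⟨d, hdne, hdsupp, hdrow, hdcol⟩ := exists_direction Ffr hFne Cint hrow hcol
      have hdC : ∀ j, IsIntR (∑ i, f i j) → ∑ i, d i j = 0 := by
        intro j hj
        exact hdcol j (by simp [hCint, hj])
      set σ : Fin m → ℝ := fun j => ∑ i, d i j with hσdef
      -- the feasibility interval
      set T : Set ℝ := {t | f + t • d ∈ P} with hT
      have happly : ∀ (t : ℝ) i j, (f + t • d) i j = f i j + t * d i j := fun t i j => rfl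
      have hsumrow : ∀ (t : ℝ) i, ∑ j, (f + t • d) i j = 1 := by
        intro t i
        simp_rw [happly t i]
        rw [Finset.sum_add_distrib, h1 i, ← Finset.mul_sum, hdrow i, mul_zero, add_zero]
      have hsumcol : ∀ (t : ℝ) j, ∑ i, (f + t • d) i j = (∑ i, f i j) + t * σ j := by
        intro t j
        simp_rw [happly t]
        rw [Finset.sum_add_distrib, ← Finset.mul_sum]
      have hT0 : (0 : ℝ) ∈ T := by
        have : f + (0 : ℝ) • d = f := by simp
        simp only [hT, Set.mem_setOf_eq, this]
        exact hf
      have hTclosed : IsClosed T := by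
        have : Continuous fun t : ℝ => f + t • d :=
          continuous_const.add (continuous_id.smul continuous_const)
        exact hPclosed.preimage this
      have hTmemP : ∀ t ∈ T, f + t • d ∈ P := fun t ht => ht
      -- T is bounded
      obtain ⟨i0, j0, hd0⟩ : ∃ i0 j0, d i0 j0 ≠ 0 := by
        by_contra hc
        push_neg at hc
        exact hdne (funext fun i => funext fun j => hc i j)
      have habs : ∀ t ∈ T, |t| ≤ 1 / |d i0 j0| := by
        intro t ht
        have hA : 0 ≤ f i0 j0 := h0 i0 j0
        have hB : f i0 j0 ≤ 1 := hub1 f hf i0 j0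
        have htP := hTmemP t ht
        have hC : 0 ≤ f i0 j0 + t * d i0 j0 := by
          have := (hP ▸ htP).1 i0 j0
          rwa [happly] at this
        have hD : f i0 j0 + t * d i0 j0 ≤ 1 := by
          have := hub1 _ htP i0 j0
          rwa [happly] at this
        have hE : |t * d i0 j0| ≤ 1 := by
          rw [abs_le]
          constructor <;> linarith
        rw [abs_mul] at hE
        rw [le_div_iff₀ (abs_pos.mpr hd0)]
        exact hE
      have hbddA : BddAbove T :=
        ⟨1 / |d i0 j0|, fun t ht => (le_abs_self t).trans (habs t ht)⟩
      have hbddB : BddBelow T :=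
        ⟨-(1 / |d i0 j0|), fun t ht => by
          have h1' := habs t ht
          have h2' := neg_abs_le t
          linarith⟩
      -- the open-interval step
      have hstep : ∀ t0 ∈ T,
          (∀ e ∈ Ffr, 0 < f e.1 e.2 + t0 * d e.1 e.2) →
          (∀ j, σ j ≠ 0 → (lb j : ℝ) < (∑ i, f i j) + t0 * σ j ∧
            (∑ i, f i j) + t0 * σ j < (ub j : ℝ)) →
          ∃ δ > 0, Set.Ioo (t0 - δ) (t0 + δ) ⊆ T := by
        intro t0 _ hent hcolstrict
        set U : Set ℝ := (⋂ e ∈ Ffr, {t : ℝ | 0 < f e.1 e.2 + t * d e.1 e.2}) ∩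
            (⋂ j ∈ Finset.univ.filter (fun j : Fin m => σ j ≠ 0),
              ({t : ℝ | (lb j : ℝ) < (∑ i, f i j) + t * σ j} ∩
               {t : ℝ | (∑ i, f i j) + t * σ j < (ub j : ℝ)})) with hU
        have hUopen : IsOpen U := by
          refine IsOpen.inter ?_ ?_
          · refine isOpen_biInter_finset fun e _ => ?_
            exact isOpen_lt continuous_const
              (continuous_const.add (continuous_id.mul continuous_const))
          · refine isOpen_biInter_finset fun j _ => ?_
            exact IsOpen.inter
              (isOpen_lt continuous_const
                (continuous_const.add (continuous_id.mul continuous_const)))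
              (isOpen_lt (continuous_const.add (continuous_id.mul continuous_const))
                continuous_const)
        have ht0U : t0 ∈ U := by
          rw [hU]
          constructor
          · simp only [Set.mem_iInter]
            intro e he
            exact hent e he
          · simp only [Set.mem_iInter, Set.mem_inter_iff, Set.mem_setOf_eq]
            intro j hj
            have := hcolstrict j (by simpa using hj)
            exact this
        obtain ⟨δ, hδ, hball⟩ := Metric.isOpen_iff.mp hUopen t0 ht0U
        refine ⟨δ, hδ, fun t ht => ?_⟩
        have htU : t ∈ U := by
          apply hball
          rw [Metric.mem_ball, Real.dist_eq, abs_lt]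
          exact ⟨by linarith [ht.1], by linarith [ht.2]⟩
        rw [hU, Set.mem_inter_iff] at htU
        obtain ⟨hU1, hU2⟩ := htU
        simp only [Set.mem_iInter, Set.mem_inter_iff, Set.mem_setOf_eq] at hU1 hU2
        show f + t • d ∈ P
        rw [hP]
        refine ⟨fun i j => ?_, hsumrow t, fun j => ?_⟩
        · rw [happly]
          by_cases hij : (i, j) ∈ Ffr
          · exact le_of_lt (hU1 (i, j) hij)
          · rw [hdsupp i j hij, mul_zero, add_zero]
            exact h0 i j
        · rw [hsumcol t j]
          by_cases hσ : σ j = 0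
          · rw [hσ, mul_zero, add_zero]
            exact h2 j
          · have := hU2 j (by simpa using hσ)
            exact ⟨this.1.le, this.2.le⟩
      -- strict interior at 0
      obtain ⟨δ0, hδ0, hδ0sub⟩ := hstep 0 hT0
        (by
          intro e he
          have hne := (Finset.mem_filter.mp he).2
          have hge := h0 e.1 e.2
          have : f e.1 e.2 ≠ 0 := fun hc => hne ⟨0, by rw [hc]; norm_num⟩
          rw [zero_mul, add_zero]
          exact lt_of_le_of_ne hge (Ne.symm this))
        (by
          intro j hσ
          have hni : ¬ IsIntR (∑ i, f i j) := fun hc => hσ (hdC j hc)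
          obtain ⟨hl, hu⟩ := h2 j
          rw [zero_mul, add_zero]
          constructor
          · exact lt_of_le_of_ne hl (fun hc => hni ⟨lb j, hc.symm⟩)
          · exact lt_of_le_of_ne hu (fun hc => hni ⟨ub j, hc⟩))
      -- endpoints of the interval
      have hTne : T.Nonempty := ⟨0, hT0⟩
      set b := sSup T with hbdef
      set a := sInf T with hadef
      have hbT : b ∈ T := hTclosed.csSup_mem hTne hbddA
      have haT : a ∈ T := hTclosed.csInf_mem hTne hbddB
      have hbpos : 0 < b := by
        have hmem : δ0 / 2 ∈ T := hδ0sub ⟨by linarith, by linarith⟩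
        have := le_csSup hbddA hmem
        linarith
      have haneg : a < 0 := by
        have hmem : -(δ0 / 2) ∈ T := hδ0sub ⟨by linarith, by linarith⟩
        have := csInf_le hbddB hmem
        linarith
      -- binding constraints at the extreme steps
      have hbinding : ∀ t1 ∈ T, (∀ δ > 0, ¬ Set.Ioo (t1 - δ) (t1 + δ) ⊆ T) →
          (∃ e ∈ Ffr, f e.1 e.2 + t1 * d e.1 e.2 = 0) ∨
          (∃ j, σ j ≠ 0 ∧ ((∑ i, f i j) + t1 * σ j = (lb j : ℝ) ∨
            (∑ i, f i j) + t1 * σ j = (ub j : ℝ))) := by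
        intro t1 ht1 hmax
        by_contra hc
        push_neg at hc
        obtain ⟨hc1, hc2⟩ := hc
        obtain ⟨δ, hδ, hsub⟩ := hstep t1 ht1
          (by
            intro e he
            have hge : 0 ≤ f e.1 e.2 + t1 * d e.1 e.2 := by
              have := (hP ▸ hTmemP t1 ht1).1 e.1 e.2
              rwa [happly] at this
            exact lt_of_le_of_ne hge (Ne.symm (hc1 e he)))
          (by
            intro j hσ
            have hbounds : (lb j : ℝ) ≤ (∑ i, f i j) + t1 * σ j ∧
                (∑ i, f i j) + t1 * σ j ≤ (ub j : ℝ) := by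
              have := (hP ▸ hTmemP t1 ht1).2.2 j
              rwa [hsumcol t1 j] at this
            obtain ⟨hne1, hne2⟩ := hc2 j hσ
            exact ⟨lt_of_le_of_ne hbounds.1 (Ne.symm hne1), lt_of_le_of_ne hbounds.2 hne2⟩)
        exact hmax δ hδ hsub
      have hmaxb : ∀ δ > 0, ¬ Set.Ioo (b - δ) (b + δ) ⊆ T := by
        intro δ hδ hsub
        have hmem : b + δ / 2 ∈ T := hsub ⟨by linarith, by linarith⟩
        have := le_csSup hbddA hmem
        linarith
      have hmaxa : ∀ δ > 0, ¬ Set.Ioo (a - δ) (a + δ) ⊆ T := by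
        intro δ hδ hsub
        have hmem : a - δ / 2 ∈ T := hsub ⟨by linarith, by linarith⟩
        have := csInf_le hbddB hmem
        linarith
      -- the count strictly decreases at both endpoints
      have hdecrease : ∀ t1 : ℝ,
          ((∃ e ∈ Ffr, f e.1 e.2 + t1 * d e.1 e.2 = 0) ∨
           (∃ j, σ j ≠ 0 ∧ ((∑ i, f i j) + t1 * σ j = (lb j : ℝ) ∨
             (∑ i, f i j) + t1 * σ j = (ub j : ℝ)))) →
          (Finset.univ.filter fun e : Fin n × Fin m =>
            ¬ IsIntR ((f + t1 • d) e.1 e.2)).card +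
          (Finset.univ.filter fun j : Fin m => ¬ IsIntR (∑ i, (f + t1 • d) i j)).card <
          Ffr.card + (Finset.univ.filter fun j : Fin m => ¬ IsIntR (∑ i, f i j)).card := by
        intro t1 hbind
        have hfsub : (Finset.univ.filter fun e : Fin n × Fin m =>
            ¬ IsIntR ((f + t1 • d) e.1 e.2)) ⊆ Ffr := by
          intro e he
          rw [Finset.mem_filter] at he ⊢
          refine ⟨Finset.mem_univ _, fun hisint => ?_⟩
          by_cases heF : e ∈ Ffr
          · exact (Finset.mem_filter.mp heF).2 hisint
          · apply he.2
            rw [happly, hdsupp e.1 e.2 (by simpa [hFfr] using heF), mul_zero, add_zero]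
            exact hisint
        have hcsub : (Finset.univ.filter fun j : Fin m =>
            ¬ IsIntR (∑ i, (f + t1 • d) i j)) ⊆
            (Finset.univ.filter fun j : Fin m => ¬ IsIntR (∑ i, f i j)) := by
          intro j hj
          rw [Finset.mem_filter] at hj ⊢
          refine ⟨Finset.mem_univ _, fun hisint => ?_⟩
          apply hj.2
          have hσ0 : σ j = 0 := hdC j hisint
          rw [hsumcol t1 j, hσ0, mul_zero, add_zero]
          exact hisint
        rcases hbind with ⟨e, he, heq⟩ | ⟨j, hσ, heq⟩
        · have henot : e ∉ (Finset.univ.filter fun e : Fin n × Fin m =>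
              ¬ IsIntR ((f + t1 • d) e.1 e.2)) := by
            rw [Finset.mem_filter]
            push_neg
            intro _
            rw [happly, heq]
            exact ⟨0, by norm_num⟩
          have hss := (Finset.ssubset_iff_of_subset hfsub).mpr ⟨e, he, henot⟩
          have h1' := Finset.card_lt_card hss
          have h2' := Finset.card_le_card hcsub
          omega
        · have hjin : j ∈ (Finset.univ.filter fun j : Fin m =>
              ¬ IsIntR (∑ i, f i j)) := by
            rw [Finset.mem_filter]
            exact ⟨Finset.mem_univ _, fun hc => hσ (hdC j hc)⟩
          have hjnot : j ∉ (Finset.univ.filter fun j : Fin m =>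
              ¬ IsIntR (∑ i, (f + t1 • d) i j)) := by
            rw [Finset.mem_filter]
            push_neg
            intro _
            rw [hsumcol t1 j]
            rcases heq with heq | heq <;> rw [heq]
            · exact ⟨lb j, rfl⟩
            · exact ⟨ub j, rfl⟩
          have hss := (Finset.ssubset_iff_of_subset hcsub).mpr ⟨j, hjin, hjnot⟩
          have h1' := Finset.card_lt_card hss
          have h2' := Finset.card_le_card hfsub
          omega
      -- put it together
      have hdecb := hdecrease b (hbinding b hbT hmaxb)
      have hdeca := hdecrease a (hbinding a haT hmaxa)
      have hg1 : f + a • d ∈ convexHull ℝ Z := ih (f + a • d) (hTmemP a haT) (by omega)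
      have hg2 : f + b • d ∈ convexHull ℝ Z := ih (f + b • d) (hTmemP b hbT) (by omega)
      have hba : (0 : ℝ) < b - a := by linarith
      set c1 : ℝ := b / (b - a) with hc1def
      set c2 : ℝ := -a / (b - a) with hc2def
      have hc1 : 0 ≤ c1 := div_nonneg hbpos.le hba.le
      have hc2 : 0 ≤ c2 := div_nonneg (by linarith) hba.le
      have hc12 : c1 + c2 = 1 := by
        rw [hc1def, hc2def]
        field_simp
        ring
      have hfeq : f = c1 • (f + a • d) + c2 • (f + b • d) := by
        funext i j
        have e1 : (c1 • (f + a • d) + c2 • (f + b • d)) i j =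
            c1 * (f i j + a * d i j) + c2 * (f i j + b * d i j) := rfl
        rw [e1, hc1def, hc2def]
        field_simp
        ring
      rw [hfeq]
      exact (convex_convexHull ℝ Z) hg1 hg2 hc1 hc2 hc12
  apply Set.Subset.antisymm
  · intro f hf
    exact main _ f hf le_rfl
  · exact convexHull_min (Set.sep_subset _ _) hPconvex
end

section
/- Let n, m be positive integers and let lb, ub : Fin m → ℤ. Let P be the set of all f : Fin n → Fin m → ℝ such that f i j ≥ 0 for all i, j; Σ_j f i j = 1 for every i; and (lb j : ℝ) ≤ Σ_i f i j ≤ (ub j : ℝ) for every j. Suppose P is nonempty and fix j₀ : Fin m. Then there exists fmin ∈ P with all entries in {0,1} such that Σ_i fmin i j₀ ≤ Σ_i f i j₀ for every f ∈ P, and there exists fmax ∈ P with all entries in {0,1} such that Σ_i fmax i j₀ ≥ Σ_i f i j₀ for every f ∈ P. In particular, the minimum and maximum of the linear functional f ↦ Σ_i f i j₀ over P are integers and are attained at 0–1 points of P. -/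
lemma exists_int_vec {ι : Type*} (s : Finset ι) (L U : ι → ℤ) :
    ∀ N : ℤ, (∀ j ∈ s, L j ≤ U j) → (∑ j ∈ s, L j) ≤ N → N ≤ (∑ j ∈ s, U j) →
    ∃ k : ι → ℤ, (∀ j ∈ s, L j ≤ k j ∧ k j ≤ U j) ∧ ∑ j ∈ s, k j = N := by
  classical
  induction s using Finset.cons_induction with
  | empty =>
    intro N _ h1 h2
    simp only [Finset.sum_empty] at h1 h2
    exact ⟨0, by simp, by simp; omega⟩
  | cons a s ha ih =>
    intro N hLU h1 h2
    simp only [Finset.sum_cons] at h1 h2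
    have hUa : L a ≤ U a := hLU a (Finset.mem_cons_self a s)
    have hsLU : ∑ j ∈ s, L j ≤ ∑ j ∈ s, U j :=
      Finset.sum_le_sum (fun j hj => hLU j (Finset.mem_cons_of_mem hj))
    obtain ⟨ka, hka1, hka2, hb1, hb2⟩ :
        ∃ ka : ℤ, L a ≤ ka ∧ ka ≤ U a ∧ (∑ j ∈ s, L j) ≤ N - ka ∧ N - ka ≤ ∑ j ∈ s, U j := by
      rcases le_total (N - ∑ j ∈ s, L j) (L a) with h | h
      · exact ⟨L a, le_refl _, hUa, by omega, by omega⟩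
      · rcases le_total (N - ∑ j ∈ s, L j) (U a) with h' | h'
        · exact ⟨N - ∑ j ∈ s, L j, h, h', by omega, by omega⟩
        · exact ⟨U a, hUa, le_refl _, by omega, by omega⟩
    obtain ⟨k, hk, hks⟩ := ih (N - ka) (fun j hj => hLU j (Finset.mem_cons_of_mem hj)) hb1 hb2
    refine ⟨Function.update k a ka, ?_, ?_⟩
    · intro j hj
      rcases Finset.mem_cons.1 hj with rfl | hj
      · simpa using ⟨hka1, hka2⟩
      · rw [Function.update_of_ne (ne_of_mem_of_not_mem hj ha)]
        exact hk j hj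
    · have hsc : ∑ x ∈ s, Function.update k a ka x = ∑ x ∈ s, k x :=
        Finset.sum_congr rfl (fun j hj => Function.update_of_ne (ne_of_mem_of_not_mem hj ha) _ _)
      rw [Finset.sum_cons, Function.update_self, hsc, hks]; ring

lemma exists_01_matrix (n m : ℕ) (k : Fin m → ℕ) (hk : ∑ j, k j = n) :
    ∃ f : Fin n → Fin m → ℝ, (∀ i j, f i j = 0 ∨ f i j = 1) ∧
      (∀ i, ∑ j, f i j = 1) ∧ (∀ j, ∑ i, f i j = (k j : ℝ)) := by
  classical
  have hcard : Fintype.card ((j : Fin m) × Fin (k j)) = n := by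
    simp [Fintype.card_sigma, hk]
  let E : Fin n ≃ (j : Fin m) × Fin (k j) := (Fintype.equivFinOfCardEq hcard).symm
  refine ⟨fun i j => if (E i).1 = j then 1 else 0, fun i j => ?_, fun i => ?_, fun j => ?_⟩
  · by_cases h : (E i).1 = j <;> simp [h]
  · simp
  · have h1 := Fintype.sum_equiv E (fun i => if (E i).1 = j then (1:ℝ) else 0)
      (fun p => if p.1 = j then (1:ℝ) else 0) (fun i => rfl)
    rw [h1]
    have h2 : ∑ p : (j : Fin m) × Fin (k j), (if p.1 = j then (1:ℝ) else 0)
        = ∑ j' : Fin m, ∑ _x : Fin (k j'), (if j' = j then (1:ℝ) else 0) := by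
      rw [← Finset.univ_sigma_univ, Finset.sum_sigma]
    rw [h2]
    simp [Finset.sum_ite_eq]

lemma roundLow {m : ℕ} (L U : Fin m → ℤ) (j₀ : Fin m) (c : Fin m → ℝ) (N : ℤ)
    (hL : ∀ j, (L j : ℝ) ≤ c j) (hU : ∀ j, c j ≤ (U j : ℝ)) (hsum : ∑ j, c j = (N : ℝ)) :
    ∃ k : Fin m → ℤ, (∀ j, L j ≤ k j ∧ k j ≤ U j) ∧ ∑ j, k j = N ∧ (k j₀ : ℝ) ≤ c j₀ := by
  classical
  have hLU : ∀ j, L j ≤ U j := fun j => by exact_mod_cast (hL j).trans (hU j)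
  set z : ℤ := min (U j₀) ⌊c j₀⌋ with hz
  have hzfloor : z ≤ ⌊c j₀⌋ := min_le_right _ _
  have hzc : (z : ℝ) ≤ c j₀ := le_trans (by exact_mod_cast hzfloor) (Int.floor_le _)
  have hLz : L j₀ ≤ z := le_min (hLU j₀) (Int.le_floor.2 (hL j₀))
  have hesplit : c j₀ + ∑ j ∈ Finset.univ.erase j₀, c j = (N : ℝ) := by
    rw [Finset.add_sum_erase _ _ (Finset.mem_univ j₀)]; exact hsum
  have heL : (∑ j ∈ Finset.univ.erase j₀, (L j : ℝ)) ≤ ∑ j ∈ Finset.univ.erase j₀, c j :=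
    Finset.sum_le_sum (fun j _ => hL j)
  have heU : (∑ j ∈ Finset.univ.erase j₀, c j) ≤ ∑ j ∈ Finset.univ.erase j₀, (U j : ℝ) :=
    Finset.sum_le_sum (fun j _ => hU j)
  have hb1 : (∑ j ∈ Finset.univ.erase j₀, L j) ≤ N - z := by
    have : ((∑ j ∈ Finset.univ.erase j₀, L j : ℤ) : ℝ) ≤ ((N - z : ℤ) : ℝ) := by
      push_cast
      calc (∑ j ∈ Finset.univ.erase j₀, (L j : ℝ)) ≤ ∑ j ∈ Finset.univ.erase j₀, c j := heL
        _ = (N : ℝ) - c j₀ := by linarith [hesplit]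
        _ ≤ (N : ℝ) - z := by linarith [hzc]
    exact_mod_cast this
  have hb2 : N - z ≤ ∑ j ∈ Finset.univ.erase j₀, U j := by
    rcases min_cases (U j₀) ⌊c j₀⌋ with ⟨hzeq, _⟩ | ⟨hzeq, _⟩
    · -- z = U j₀ : use N ≤ ∑ U
      have hNU : (N : ℝ) ≤ ∑ j, (U j : ℝ) := hsum ▸ Finset.sum_le_sum (fun j _ => hU j)
      have hNU' : N ≤ ∑ j, U j := by exact_mod_cast (by push_cast at hNU ⊢; exact hNU : (N:ℝ) ≤ ((∑ j, U j : ℤ) : ℝ))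
      have : ∑ j, U j = U j₀ + ∑ j ∈ Finset.univ.erase j₀, U j :=
        (Finset.add_sum_erase _ _ (Finset.mem_univ j₀)).symm
      omega
    · -- z = ⌊c j₀⌋
      rw [hz, hzeq]
      rw [sub_le_iff_le_add, ← sub_le_iff_le_add']
      refine Int.le_floor.2 ?_
      push_cast
      have : (N : ℝ) - c j₀ ≤ ((∑ j ∈ Finset.univ.erase j₀, U j : ℤ) : ℝ) := by
        push_cast
        linarith [hesplit, heU]
      linarith [this]
  obtain ⟨k, hk, hks⟩ := exists_int_vec (Finset.univ.erase j₀) L U (N - z)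
    (fun j _ => hLU j) hb1 hb2
  refine ⟨Function.update k j₀ z, fun j => ?_, ?_, by simp [Function.update_self]; exact hzc⟩
  · by_cases h : j = j₀
    · subst h; simp [Function.update_self]; exact ⟨hLz, min_le_left _ _⟩
    · rw [Function.update_of_ne h]
      exact hk j (Finset.mem_erase.2 ⟨h, Finset.mem_univ j⟩)
  · rw [← Finset.add_sum_erase _ _ (Finset.mem_univ j₀), Function.update_self]
    have : ∑ j ∈ Finset.univ.erase j₀, Function.update k j₀ z j
        = ∑ j ∈ Finset.univ.erase j₀, k j :=
      Finset.sum_congr rfl (fun j hj => Function.update_of_ne (Finset.mem_erase.1 hj).1 _ _)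
    rw [this, hks]; ring

lemma roundHigh {m : ℕ} (L U : Fin m → ℤ) (j₀ : Fin m) (c : Fin m → ℝ) (N : ℤ)
    (hL : ∀ j, (L j : ℝ) ≤ c j) (hU : ∀ j, c j ≤ (U j : ℝ)) (hsum : ∑ j, c j = (N : ℝ)) :
    ∃ k : Fin m → ℤ, (∀ j, L j ≤ k j ∧ k j ≤ U j) ∧ ∑ j, k j = N ∧ c j₀ ≤ (k j₀ : ℝ) := by
  obtain ⟨k, hk, hks, hkc⟩ := roundLow (fun j => -U j) (fun j => -L j) j₀ (fun j => -(c j)) (-N)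
    (fun j => by push_cast; linarith [hU j]) (fun j => by push_cast; linarith [hL j])
    (by rw [Finset.sum_neg_distrib, hsum]; push_cast; ring)
  refine ⟨fun j => -(k j), fun j => ⟨by simp only []; have := (hk j).2; omega, by simp only []; have := (hk j).1; omega⟩, ?_, ?_⟩
  · simp only []; rw [Finset.sum_neg_distrib, hks]; ring
  · push_cast at hkc ⊢; linarith


/-- The LP bounds on the count of a fixed bin over the feasible region of the
flow reformulation of the `bin_counts` constraint are attained at 0–1 points. -/
theorem bin_counts_lp_bounds_attained_at_integral_points
    (n m : ℕ) (hn : 0 < n) (hm : 0 < m) (lb ub : Fin m → ℤ)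
    (P : Set (Fin n → Fin m → ℝ))
    (hP : P = {f | (∀ i j, 0 ≤ f i j) ∧ (∀ i, ∑ j, f i j = 1) ∧
      (∀ j, (lb j : ℝ) ≤ ∑ i, f i j ∧ ∑ i, f i j ≤ (ub j : ℝ))})
    (hne : P.Nonempty) (j₀ : Fin m) :
    (∃ fmin ∈ P, (∀ i j, fmin i j = 0 ∨ fmin i j = 1) ∧
      ∀ f ∈ P, ∑ i, fmin i j₀ ≤ ∑ i, f i j₀) ∧
    (∃ fmax ∈ P, (∀ i j, fmax i j = 0 ∨ fmax i j = 1) ∧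
      ∀ f ∈ P, ∑ i, f i j₀ ≤ ∑ i, fmax i j₀) := by
  classical
  subst hP
  set L : Fin m → ℤ := fun j => max 0 (lb j) with hLdef
  -- basic facts about column sums of members of P
  have colfacts : ∀ f : Fin n → Fin m → ℝ,
      f ∈ {f : Fin n → Fin m → ℝ | (∀ i j, 0 ≤ f i j) ∧ (∀ i, ∑ j, f i j = 1) ∧
        (∀ j, (lb j : ℝ) ≤ ∑ i, f i j ∧ ∑ i, f i j ≤ (ub j : ℝ))} →
      (∀ j, (L j : ℝ) ≤ ∑ i, f i j) ∧ (∀ j, (∑ i, f i j) ≤ (ub j : ℝ)) ∧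
        (∑ j, ∑ i, f i j) = ((n : ℤ) : ℝ) := by
    intro f hf
    obtain ⟨hpos, hrow, hcol⟩ := hf
    refine ⟨fun j => ?_, fun j => (hcol j).2, ?_⟩
    · have h0 : (0 : ℝ) ≤ ∑ i, f i j := Finset.sum_nonneg (fun i _ => hpos i j)
      have := (hcol j).1
      rw [hLdef]; push_cast; exact max_le h0 this
    · rw [Finset.sum_comm]
      simp [hrow]
  -- the predicate of achievable integral column counts at j₀
  set Q : ℤ → Prop := fun z => ∃ k : Fin m → ℤ,
    (∀ j, L j ≤ k j ∧ k j ≤ ub j) ∧ (∑ j, k j) = (n : ℤ) ∧ k j₀ = z with hQdef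
  obtain ⟨f₀, hf₀⟩ := hne
  obtain ⟨h₀L, h₀U, h₀S⟩ := colfacts f₀ hf₀
  have hQne : ∃ z, Q z := by
    obtain ⟨k, hk, hks, _⟩ := roundLow L ub j₀ (fun j => ∑ i, f₀ i j) n h₀L h₀U h₀S
    exact ⟨k j₀, k, hk, hks, rfl⟩
  have hQlb : ∀ z, Q z → L j₀ ≤ z := by
    rintro z ⟨k, hk, _, rfl⟩; exact (hk j₀).1
  have hQub : ∀ z, Q z → z ≤ ub j₀ := by
    rintro z ⟨k, hk, _, rfl⟩; exact (hk j₀).2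
  -- build a 0-1 matrix from any witness of Q
  have build : ∀ (k : Fin m → ℤ), (∀ j, L j ≤ k j ∧ k j ≤ ub j) → (∑ j, k j) = (n : ℤ) →
      ∃ g : Fin n → Fin m → ℝ,
        (g ∈ {f : Fin n → Fin m → ℝ | (∀ i j, 0 ≤ f i j) ∧ (∀ i, ∑ j, f i j = 1) ∧
          (∀ j, (lb j : ℝ) ≤ ∑ i, f i j ∧ ∑ i, f i j ≤ (ub j : ℝ))}) ∧
        (∀ i j, g i j = 0 ∨ g i j = 1) ∧ (∀ j, ∑ i, g i j = (k j : ℝ)) := by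
    intro k hk hks
    have hk0 : ∀ j, 0 ≤ k j := fun j => le_trans (le_max_left _ _) (hk j).1
    have hcast : ∀ j, ((k j).toNat : ℤ) = k j := fun j => Int.toNat_of_nonneg (hk0 j)
    have hsumnat : ∑ j, (k j).toNat = n := by
      have : ((∑ j, (k j).toNat : ℕ) : ℤ) = ((n : ℕ) : ℤ) := by
        push_cast
        rw [Finset.sum_congr rfl (fun j _ => hcast j), hks]
      exact_mod_cast this
    obtain ⟨g, hg01, hgrow, hgcol⟩ := exists_01_matrix n m (fun j => (k j).toNat) hsumnat
    have hgcol' : ∀ j, ∑ i, g i j = (k j : ℝ) := by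
      intro j; rw [hgcol j]; exact_mod_cast congrArg (fun z : ℤ => (z : ℝ)) (hcast j)
    refine ⟨g, ⟨fun i j => ?_, hgrow, fun j => ?_⟩, hg01, hgcol'⟩
    · rcases hg01 i j with h | h <;> rw [h]; norm_num
    · rw [hgcol' j]
      constructor
      · exact_mod_cast (le_trans (le_max_right 0 (lb j)) (hk j).1 : lb j ≤ k j)
      · exact_mod_cast (hk j).2
  -- minimum side
  obtain ⟨zmin, hzQ, hzmin⟩ := Int.exists_least_of_bdd ⟨L j₀, hQlb⟩ hQne
  obtain ⟨kmin, hkmin, hkmins, hkminj⟩ := hzQ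
  obtain ⟨fmin, hfminP, hfmin01, hfmincol⟩ := build kmin hkmin hkmins
  -- maximum side
  obtain ⟨zmax, hzQ', hzmax⟩ := Int.exists_greatest_of_bdd ⟨ub j₀, hQub⟩ hQne
  obtain ⟨kmax, hkmax, hkmaxs, hkmaxj⟩ := hzQ'
  obtain ⟨fmax, hfmaxP, hfmax01, hfmaxcol⟩ := build kmax hkmax hkmaxs
  constructor
  · refine ⟨fmin, hfminP, hfmin01, fun f hf => ?_⟩
    obtain ⟨hL', hU', hS'⟩ := colfacts f hf
    obtain ⟨k, hk, hks, hkc⟩ := roundLow L ub j₀ (fun j => ∑ i, f i j) n hL' hU' hS'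
    have hz : zmin ≤ k j₀ := hzmin _ ⟨k, hk, hks, rfl⟩
    rw [hfmincol j₀, hkminj]
    calc (zmin : ℝ) ≤ (k j₀ : ℝ) := by exact_mod_cast hz
      _ ≤ ∑ i, f i j₀ := hkc
  · refine ⟨fmax, hfmaxP, hfmax01, fun f hf => ?_⟩
    obtain ⟨hL', hU', hS'⟩ := colfacts f hf
    obtain ⟨k, hk, hks, hkc⟩ := roundHigh L ub j₀ (fun j => ∑ i, f i j) n hL' hU' hS'
    have hz : k j₀ ≤ zmax := hzmax _ ⟨k, hk, hks, rfl⟩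
    rw [hfmaxcol j₀, hkmaxj]
    calc ∑ i, f i j₀ ≤ (k j₀ : ℝ) := hkc
      _ ≤ (zmax : ℝ) := by exact_mod_cast hz
end

section
/- Let A be an r × c matrix with real entries, all lying in {−1, 0, 1}, such that every column of A contains at most two nonzero entries. Suppose there exists a subset B of the row indices such that for every column k containing exactly two nonzero entries, at rows p ≠ q: if A p k = A q k (same sign), then exactly one of p, q belongs to B; and if A p k = −A q k (opposite signs), then p and q both belong to B or both belong to its complement. Then A is totally unimodular: every square submatrix of A, obtained by selecting any injective sequence of rows and any injective sequence of columns, has determinant equal to −1, 0, or 1. -/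
private lemma ht_mem_signRange {x : ℝ} (h : x = -1 ∨ x = 0 ∨ x = 1) :
    x ∈ Set.range (SignType.cast : SignType → ℝ) := by
  obtain h | h | h := h <;> subst h
  · exact ⟨-1, by simp⟩
  · exact ⟨0, by simp⟩
  · exact ⟨1, by simp⟩

/-- The Heller–Tompkins sufficient condition for total unimodularity: if all
entries of `A` lie in `{-1, 0, 1}`, every column has at most two nonzero
entries, and the rows can be partitioned into a set `B` and its complement so
that two same-sign nonzero entries of a column lie in different parts while two
opposite-sign nonzero entries lie in the same part, then `A` is totally
unimodular. -/
theorem heller_tompkins_isTotallyUnimodular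
    (r c : ℕ) (A : Matrix (Fin r) (Fin c) ℝ)
    (hentries : ∀ p k, A p k = -1 ∨ A p k = 0 ∨ A p k = 1)
    (hcols : ∀ k : Fin c, (Finset.univ.filter fun p => A p k ≠ 0).card ≤ 2)
    (B : Set (Fin r))
    (hB : ∀ (k : Fin c) (p q : Fin r), p ≠ q → A p k ≠ 0 → A q k ≠ 0 →
      (A p k = A q k → (p ∈ B ↔ q ∉ B)) ∧
      (A p k = -A q k → (p ∈ B ↔ q ∈ B))) :
    A.IsTotallyUnimodular := by
  classical
  intro k
  induction k with
  | zero =>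
    intro f g _ _
    exact ht_mem_signRange (by right; right; exact Matrix.det_fin_zero)
  | succ n ih =>
    intro f g hf hg
    by_cases hone : ∃ j i, A (f i) (g j) ≠ 0 ∧ ∀ i', i' ≠ i → A (f i') (g j) = 0
    · -- a column with exactly one nonzero entry: Laplace expansion
      obtain ⟨j, i, hij, hz⟩ := hone
      have hdet : (A.submatrix f g).det =
          (-1) ^ (i + j : ℕ) * A (f i) (g j) *
            ((A.submatrix f g).submatrix i.succAbove j.succAbove).det := by
        rw [Matrix.det_succ_column (A.submatrix f g) j]
        rw [Finset.sum_eq_single i]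
        · rfl
        · intro b _ hb
          have : A (f b) (g j) = 0 := hz b hb
          simp [Matrix.submatrix_apply, this]
        · intro h; exact absurd (Finset.mem_univ i) h
      have hminor : ((A.submatrix f g).submatrix i.succAbove j.succAbove).det ∈
          Set.range (SignType.cast : SignType → ℝ) := by
        rw [Matrix.submatrix_submatrix]
        exact ih (f ∘ i.succAbove) (g ∘ j.succAbove)
          (hf.comp (Fin.succAbove_right_injective))
          (hg.comp (Fin.succAbove_right_injective))
      obtain ⟨s, hs⟩ := hminor
      apply ht_mem_signRange
      rw [hdet, ← hs]
      have ha := hentries (f i) (g j)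
      have hpow := neg_one_pow_eq_or ℝ (i + j : ℕ)
      clear hB hcols hentries hz hdet hs ih hij
      rcases ha with ha | ha | ha <;> rcases hpow with hp | hp <;>
        rcases s with _ | _ | _ <;> rw [hp, ha] <;> norm_num
    · -- every column has 0 or ≥ 2 nonzero entries among selected rows
      by_cases hzero : ∃ j, ∀ i, A (f i) (g j) = 0
      · obtain ⟨j, hj⟩ := hzero
        apply ht_mem_signRange
        right; left
        exact Matrix.det_eq_zero_of_column_eq_zero j (fun i => hj i)
      · -- every column has at least two nonzero entries; rows are dependent
        push_neg at hone hzero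
        apply ht_mem_signRange
        right; left
        set v : Fin (n + 1) → ℝ := fun i => if f i ∈ B then 1 else -1 with hv
        apply Matrix.exists_vecMul_eq_zero_iff.mp
        refine ⟨v, ?_, ?_⟩
        · intro hv0
          have h0 := congrFun hv0 0
          simp only [hv, Pi.zero_apply] at h0
          split_ifs at h0 <;> norm_num at h0
        · funext j
          obtain ⟨p, hp⟩ := hzero j
          obtain ⟨q, hqp, hq⟩ := hone j p hp
          -- all other rows are zero in this column
          have hrest : ∀ i, i ≠ p → i ≠ q → A (f i) (g j) = 0 := by
            intro i hip hiq
            by_contra hi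
            have hsub : ({f p, f q, f i} : Finset (Fin r)) ⊆
                Finset.univ.filter fun x => A x (g j) ≠ 0 := by
              intro x hx
              simp only [Finset.mem_insert, Finset.mem_singleton] at hx
              rcases hx with rfl | rfl | rfl <;> simp [hp, hq, hi]
            have hcard : ({f p, f q, f i} : Finset (Fin r)).card = 3 :=
              Finset.card_eq_three.mpr ⟨f p, f q, f i,
                fun h => hqp (hf h).symm, fun h => hip (hf h).symm,
                fun h => hiq (hf h).symm, rfl⟩
            have hle := Finset.card_le_card hsub
            rw [hcard] at hle
            have := le_trans hle (hcols (g j))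
            omega
          have hsum : (Matrix.vecMul v (A.submatrix f g)) j
              = ∑ i, v i * A (f i) (g j) := by
            simp [Matrix.vecMul, dotProduct, Matrix.submatrix_apply]
          rw [Pi.zero_apply, hsum]
          rw [← Finset.sum_subset (Finset.subset_univ ({p, q} : Finset (Fin (n + 1))))
            (by
              intro x _ hx
              simp only [Finset.mem_insert, Finset.mem_singleton] at hx
              push_neg at hx
              rw [hrest x hx.1 hx.2, mul_zero])]
          rw [Finset.sum_pair (fun h => hqp h.symm)]
          have hfpq : f p ≠ f q := fun h => hqp (hf h).symm
          have hBpq := hB (g j) (f p) (f q) hfpq hp hq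
          have hcases : A (f p) (g j) = A (f q) (g j) ∨
              A (f p) (g j) = -A (f q) (g j) := by
            rcases hentries (f p) (g j) with hap | hap | hap <;>
              rcases hentries (f q) (g j) with haq | haq | haq <;>
              first
              | (exact absurd hap hp)
              | (exact absurd haq hq)
              | (rw [hap, haq]; norm_num)
          rcases hcases with hsame | hopp
          · have hmem := hBpq.1 hsame
            by_cases hfp : f p ∈ B
            · have hq' : f q ∉ B := hmem.mp hfp
              simp only [hv, if_pos hfp, if_neg hq']
              rw [hsame]; ring
            · have hq' : f q ∈ B := by
                by_contra hfq
                exact hfp (hmem.mpr hfq)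
              simp only [hv, if_neg hfp, if_pos hq']
              rw [hsame]; ring
          · have hmem := hBpq.2 hopp
            by_cases hfp : f p ∈ B
            · have hq' : f q ∈ B := hmem.mp hfp
              simp only [hv, if_pos hfp, if_pos hq']
              rw [hopp]; ring
            · have hq' : f q ∉ B := fun h => hfp (hmem.mpr h)
              simp only [hv, if_neg hfp, if_neg hq']
              rw [hopp]; ring
end

section
/- Let A be an r × c matrix with real entries whose entries are all integers and which is totally unimodular, and let b : Fin r → ℤ. Then every extreme point of the polyhedron {x : Fin c → ℝ | (∀ k, x k ≥ 0) ∧ ∀ row p, (A.mulVec x) p ≤ (b p : ℝ)} has all coordinates in ℤ. -/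
/-!
Write the polyhedron as `{x | M x ≤ β}` with `M = [A; -1]`, which is again totally unimodular.
At an extreme point `x` the tight rows of `M` have trivial common kernel: otherwise `x` could be
moved both ways along a direction in that kernel without leaving the polyhedron. Hence `c` of the
tight rows form an invertible square submatrix `B`, so `x` solves `B x = d` with `d` integral.
Total unimodularity makes `det B = ±1`, so `B⁻¹` is an integer matrix and `x = B⁻¹ d` is integral.
-/

open Matrix Filter Topology Function

theorem eq_zero_of_mem_extremePoints_of_add_mem_of_sub_mem {𝕜 E : Type*} [DivisionRing 𝕜]
    [LinearOrder 𝕜] [IsStrictOrderedRing 𝕜] [AddCommGroup E] [Module 𝕜 E] {A : Set E} {x y : E}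
    (hx : x ∈ A.extremePoints 𝕜) (hadd : x + y ∈ A) (hsub : x - y ∈ A) : y = 0 := by
  have : Invertible (2 : 𝕜) := invertibleOfNonzero two_ne_zero
  simpa using hx.2 hadd hsub (mem_openSegment_add_sub x y)

namespace Matrix

section TotallyUnimodular

variable {m n R : Type*} [CommRing R]

theorem IsTotallyUnimodular.exists_map_intCast_eq {A : Matrix m n R}
    (hA : A.IsTotallyUnimodular) : ∃ Az : Matrix m n ℤ, Az.map (Int.cast : ℤ → R) = A := by
  choose s hs using hA.apply
  exact ⟨of fun i j => s i j, by ext i j; simp [SignType.intCast_cast, hs]⟩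

theorem IsTotallyUnimodular.of_map_intCast [CharZero R] {A : Matrix m n ℤ}
    (hA : (A.map (Int.cast : ℤ → R)).IsTotallyUnimodular) : A.IsTotallyUnimodular := by
  intro k f g hf hg
  obtain ⟨s, hs⟩ := hA k f g hf hg
  refine ⟨s, Int.cast_injective (α := R) ?_⟩
  rw [SignType.intCast_cast, hs]
  exact (RingHom.map_det (Int.castRingHom R) _).symm

theorem IsTotallyUnimodular.isUnit_det [Fintype n] [DecidableEq n] {A : Matrix n n R}
    (hA : A.IsTotallyUnimodular) (h : A.det ≠ 0) : IsUnit A.det := by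
  obtain ⟨s, hs⟩ := (isTotallyUnimodular_iff_fintype A).1 hA n id id
  rw [submatrix_id_id] at hs
  rw [← hs] at h ⊢
  cases s
  · simp at h
  · simp
  · simp

theorem IsTotallyUnimodular.fromRows_neg_one [DecidableEq n] {A : Matrix m n R}
    (hA : A.IsTotallyUnimodular) : (fromRows A (-1 : Matrix n n R)).IsTotallyUnimodular :=
  hA.fromRows_unitlike fun _ i => ⟨i, -1, by
    ext j; rcases eq_or_ne i j with rfl | hij <;> simp [*]⟩

end TotallyUnimodular

variable {ι n : Type*} [Fintype n]

theorem exists_isUnit_submatrix_of_mulVec_injective {K : Type*} [Field K] [Finite ι]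
    [DecidableEq n] {M : Matrix ι n K} (hM : Injective M.mulVec) :
    ∃ g : n → ι, IsUnit (M.submatrix g id) := by
  have hspan : Submodule.span K (Set.range M.row) = ⊤ := by
    refine Submodule.eq_top_of_finrank_eq ?_
    rw [← rank_eq_finrank_span_row]
    exact LinearMap.finrank_range_of_inj (f := M.mulVecLin) hM
  obtain ⟨κ, a, -, haspan, hali⟩ := exists_linearIndependent' K M.row
  rw [hspan] at haspan
  let e : n ≃ κ := (Pi.basisFun K n).indexEquiv (Module.Basis.mk hali haspan.ge)
  exact ⟨a ∘ e, linearIndependent_rows_iff_isUnit.1 (hali.comp e e.injective)⟩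

theorem eq_comp_mulVec_of_map_mulVec_eq {R S : Type*} [CommRing R] [CommRing S] [DecidableEq n]
    (f : R →+* S) {B : Matrix n n R} (hB : IsUnit B.det) {x : n → S} {d : n → R}
    (h : B.map f *ᵥ x = f ∘ d) : x = f ∘ (B⁻¹ *ᵥ d) := by
  funext j
  calc x j = ((B⁻¹ * B).map f *ᵥ x) j := by rw [nonsing_inv_mul B hB]; simp
    _ = (B⁻¹.map f *ᵥ (f ∘ d)) j := by rw [Matrix.map_mul, ← mulVec_mulVec, h]
    _ = f ((B⁻¹ *ᵥ d) j) := (RingHom.map_mulVec f _ d j).symm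

variable [Finite ι] {M : Matrix ι n ℝ} {β : ι → ℝ} {x : n → ℝ}

theorem eventually_mulVec_add_smul_le {v : n → ℝ} (hx : M *ᵥ x ≤ β)
    (hv : ∀ i, (M *ᵥ x) i = β i → (M *ᵥ v) i = 0) :
    ∀ᶠ t in 𝓝 (0 : ℝ), M *ᵥ (x + t • v) ≤ β := by
  simp only [Pi.le_def, mulVec_add, mulVec_smul, Pi.add_apply, Pi.smul_apply, smul_eq_mul]
  refine eventually_all.2 fun i => ?_
  rcases (hx i).eq_or_lt with htight | hslack
  · exact .of_forall fun t => by simp [htight, hv i htight]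
  · have hcont : Continuous fun t : ℝ => (M *ᵥ x) i + t * (M *ᵥ v) i := by fun_prop
    exact (hcont.tendsto' 0 _ (by simp)).eventually (eventually_le_nhds hslack)

theorem mulVec_injective_submatrix_tight_of_mem_extremePoints
    (hx : x ∈ Set.extremePoints ℝ {x | M *ᵥ x ≤ β}) :
    Injective (M.submatrix (Subtype.val : {i // (M *ᵥ x) i = β i} → ι) id).mulVec := by
  refine (injective_iff_map_eq_zero (M.submatrix _ id).mulVecLin).2 fun v hv => ?_
  have hnear := eventually_mulVec_add_smul_le hx.1 fun i hi => congrFun hv ⟨i, hi⟩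
  have hboth : ∀ᶠ t in 𝓝 (0 : ℝ), x + t • v ∈ {x | M *ᵥ x ≤ β} ∧ x - t • v ∈ {x | M *ᵥ x ≤ β} :=
    hnear.and <| by
      simpa [sub_eq_add_neg] using (continuous_neg.tendsto' 0 0 neg_zero).eventually hnear
  obtain ⟨t, ⟨hadd, hsub⟩, ht⟩ :=
    ((hboth.filter_mono nhdsWithin_le_nhds).and self_mem_nhdsWithin).exists (f := 𝓝[≠] (0 : ℝ))
  have htv : t • v = 0 := eq_zero_of_mem_extremePoints_of_add_mem_of_sub_mem hx hadd hsub
  exact (smul_eq_zero.1 htv).resolve_left ht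

theorem IsTotallyUnimodular.exists_intCast_eq_of_mem_extremePoints [DecidableEq n]
    (hM : M.IsTotallyUnimodular) (b : ι → ℤ)
    (hx : x ∈ Set.extremePoints ℝ {x | M *ᵥ x ≤ Int.cast ∘ b}) :
    ∃ z : n → ℤ, x = Int.cast ∘ z := by
  obtain ⟨Mz, rfl⟩ := hM.exists_map_intCast_eq
  obtain ⟨g, hg⟩ := exists_isUnit_submatrix_of_mulVec_injective
    (mulVec_injective_submatrix_tight_of_mem_extremePoints hx)
  set B := Mz.submatrix (Subtype.val ∘ g) id
  have hcast :
      (B.det : ℝ) = (((Mz.map Int.cast).submatrix Subtype.val id).submatrix g id).det := by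
    rw [submatrix_submatrix, submatrix_map]
    exact RingHom.map_det (Int.castRingHom ℝ) B
  have hB : IsUnit B.det := (hM.of_map_intCast.submatrix _ _).isUnit_det fun h0 =>
    ((isUnit_iff_isUnit_det _).1 hg).ne_zero (by rw [← hcast, h0, Int.cast_zero])
  refine ⟨B⁻¹ *ᵥ (b ∘ Subtype.val ∘ g),
    eq_comp_mulVec_of_map_mulVec_eq (Int.castRingHom ℝ) hB ?_⟩
  funext j
  rw [← submatrix_map]
  exact (g j).2

end Matrix

theorem totallyUnimodular_polyhedron_extremePoints_integral_general
    (r c : ℕ) (A : Matrix (Fin r) (Fin c) ℝ)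
    (hA : A.IsTotallyUnimodular) (b : Fin r → ℤ) :
    ∀ x ∈ Set.extremePoints ℝ
      {x : Fin c → ℝ | (∀ k, 0 ≤ x k) ∧ ∀ p, A.mulVec x p ≤ (b p : ℝ)},
      ∀ k, ∃ z : ℤ, x k = (z : ℝ) := by
  intro x hx k
  have hP : {x : Fin c → ℝ | (∀ k, 0 ≤ x k) ∧ ∀ p, A.mulVec x p ≤ (b p : ℝ)} =
      {x | fromRows A (-1 : Matrix (Fin c) (Fin c) ℝ) *ᵥ x ≤ Int.cast ∘ Sum.elim b 0} := by
    ext y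
    simp [Pi.le_def, fromRows_mulVec, neg_mulVec, and_comm]
  rw [hP] at hx
  obtain ⟨z, rfl⟩ := hA.fromRows_neg_one.exists_intCast_eq_of_mem_extremePoints _ hx
  exact ⟨z k, rfl⟩

/-- Integrality of polyhedra defined by totally unimodular matrices with
integral right-hand sides: every extreme point of
`{x ≥ 0 | A x ≤ b}` has integer coordinates. -/
theorem totallyUnimodular_polyhedron_extremePoints_integral
    (r c : ℕ) (A : Matrix (Fin r) (Fin c) ℝ)
    (hint : ∀ (p : Fin r) (k : Fin c), ∃ z : ℤ, A p k = (z : ℝ))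
    (hA : A.IsTotallyUnimodular) (b : Fin r → ℤ) :
    ∀ x ∈ Set.extremePoints ℝ
      {x : Fin c → ℝ | (∀ k, 0 ≤ x k) ∧ ∀ p, A.mulVec x p ≤ (b p : ℝ)},
      ∀ k, ∃ z : ℤ, x k = (z : ℝ) :=
  totallyUnimodular_polyhedron_extremePoints_integral_general r c A hA b
end
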